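/- arXiv:math/0009079 — 4 statements merged into one kernel-verified Lean document; each statement's English description precedes it below -/
import Mathlib

section
/- Let μ be a singular cardinal of cofinality ω with ⟨μₙ : n < ω⟩ a strictly increasing sequence of regular cardinals with supremum μ. Let Q be the set of closed subsets of μ of cardinality μ, ordered by q₁ ≤ q₂ iff |q₁ \ q₂| < μ. Then the set of normal conditions is dense in Q, where q is normal if, letting ⟨mₙ⟩ enumerate {m : q ∩ [μₘ, μₘ₊₁) ≠ ∅} increasingly, the order type of q ∩ [μ_{mₙ}, μ_{mₙ+1}) equals μₙ + 1 for every n. -/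
open Cardinal Set

noncomputable section

/-- Cardinality of a set of ordinals. -/
def scard (s : Set Ordinal.{0}) : Cardinal.{1} := Cardinal.mk s

/-- The set of accumulation points of a set of ordinals `p`:
ordinals `α` such that `p ∩ α` is nonempty and unbounded in `α`. -/
def accSet (p : Set Ordinal.{0}) : Set Ordinal.{0} :=
  {α | (p ∩ Set.Iio α).Nonempty ∧ α = sSup (p ∩ Set.Iio α)}

/-- A set of ordinals is closed iff it contains all of its accumulation
points below its supremum. -/
def IsClosedCond (q : Set Ordinal.{0}) : Prop :=
  accSet q ∩ Set.Iio (sSup q) ⊆ q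

/-- Order type of a set of ordinals. -/
def otp (s : Set Ordinal.{0}) : Ordinal.{1} :=
  Ordinal.type ((· < ·) : s → s → Prop)

/-- Membership in the poset `P`: subsets of `μ` of cardinality `μ`. -/
def InP (μ : Cardinal.{0}) (p : Set Ordinal.{0}) : Prop :=
  p ⊆ Set.Iio μ.ord ∧ scard p = Cardinal.lift.{1,0} μ

/-- The almost-inclusion ordering: `p₁ ≤ p₂` iff `|p₁ \ p₂| < μ`. -/
def condLe (μ : Cardinal.{0}) (p₁ p₂ : Set Ordinal.{0}) : Prop :=
  scard (p₁ \ p₂) < Cardinal.lift.{1,0} μ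

/-- Membership in the poset `Q`: closed subsets of `μ` of cardinality `μ`. -/
def InQ (μ : Cardinal.{0}) (q : Set Ordinal.{0}) : Prop :=
  InP μ q ∧ IsClosedCond q

/-- The interval `[μₙ, μₙ₊₁)`. -/
def interval (μseq : ℕ → Cardinal.{0}) (n : ℕ) : Set Ordinal.{0} :=
  Set.Ico ((μseq n).ord) ((μseq (n+1)).ord)

/-- `a(q) = {n : q ∩ [μₙ, μₙ₊₁) ≠ ∅}`. -/
def aSet (μseq : ℕ → Cardinal.{0}) (q : Set Ordinal.{0}) : Set ℕ :=
  {n | (q ∩ interval μseq n).Nonempty}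

/-- Normality: letting `⟨mₙ⟩` enumerate `a(q)` increasingly,
`otp (q ∩ [μ_{mₙ}, μ_{mₙ+1})) = μₙ + 1`. -/
def IsNormalCond (μseq : ℕ → Cardinal.{0}) (q : Set Ordinal.{0}) : Prop :=
  ∃ m : ℕ → ℕ, StrictMono m ∧ Set.range m = aSet μseq q ∧
    ∀ n, otp (q ∩ interval μseq (m n)) = Ordinal.lift.{1,0} ((μseq n).ord + 1)

/-- `χ⁺_q(n) = sup (q ∩ [μₙ, μₙ₊₁))`. -/
def chiP (μseq : ℕ → Cardinal.{0}) (q : Set Ordinal.{0}) (n : ℕ) : Ordinal.{0} :=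
  sSup (q ∩ interval μseq n)

/-- `χ⁻_q(n) = min (q ∩ [μₙ, μₙ₊₁))`. -/
def chiM (μseq : ℕ → Cardinal.{0}) (q : Set Ordinal.{0}) (n : ℕ) : Ordinal.{0} :=
  sInf (q ∩ interval μseq n)

/-- `μₙ` is a strictly increasing sequence of regular cardinals with supremum `μ`. -/
def GoodSeq (μ : Cardinal.{0}) (μseq : ℕ → Cardinal.{0}) : Prop :=
  StrictMono μseq ∧ (∀ n, (μseq n).IsRegular) ∧ μ = ⨆ n, μseq n

/-!
Since `|q| = μ` is a countable supremum of the `μₘ`, for every `n` the set `q` meets cofinally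
many intervals `[μₘ, μₘ₊₁)` in at least `μₙ` points, so there is a strictly increasing sequence
`mₙ` with `|q ∩ [μ_{mₙ}, μ_{mₙ+1})| ≥ μₙ`. In that interval the first `μₙ` points of `q` have a
supremum `τₙ`, which lies in `q` because `q` is closed and stays below `μ_{mₙ+1}` because that
cardinal is regular; hence `q ∩ [μ_{mₙ}, τₙ]` has order type `μₙ + 1`. The union of these blocks
is `q ∩ ⋃ₙ [μ_{mₙ}, τₙ]`, the intersection of `q` with a set closed below `μ`, so it is a closed
subset of `q` of size `μ`.
-/

theorem Monotone.exists_mem_Ico_succ {α : Type*} [LinearOrder α] {f : ℕ → α} (hf : Monotone f)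
    {k m : ℕ} {x : α} (hk : f k ≤ x) (hm : x < f m) : ∃ n, k ≤ n ∧ x ∈ Ico (f n) (f (n + 1)) := by
  by_contra h
  have hle : ∀ n, k ≤ n → f n ≤ x := fun n hn =>
    Nat.le_induction hk (fun n hn ih => not_lt.1 fun hlt => h ⟨n, hn, ih, hlt⟩) n hn
  exact (hf (le_max_right k m)).not_gt ((hle (max k m) (le_max_left k m)).trans_lt hm)

theorem otp_congr {s t : Set Ordinal.{0}} (e : s ≃o t) : otp s = otp t :=
  Ordinal.type_eq.2 ⟨e.toRelIsoLT⟩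

theorem otp_image_of_strictMono {f : Ordinal.{0} → Ordinal.{0}} (hf : StrictMono f)
    (s : Set Ordinal.{0}) : otp (f '' s) = otp s :=
  (otp_congr <| StrictMono.orderIsoOfSurjective (fun x : s => ⟨f x, mem_image_of_mem f x.2⟩)
    (fun _ _ h => hf h) (by rintro ⟨_, x, hx, rfl⟩; exact ⟨⟨x, hx⟩, rfl⟩)).symm

theorem otp_Iio (o : Ordinal.{0}) : otp (Iio o) = Ordinal.lift.{1} o :=
  Ordinal.typein_ordinal o

theorem otp_insert_of_forall_lt {s : Set Ordinal.{0}} {τ : Ordinal.{0}} (h : ∀ x ∈ s, x < τ) :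
    otp (insert τ s) = otp s + 1 := by
  classical
  have hτ : τ ∉ s := fun hs => (h τ hs).false
  have e : Sum.Lex ((· < ·) : s → s → Prop) (@emptyRelation PUnit.{2}) ≃r
      ((· < ·) : ↥(insert τ s) → ↥(insert τ s) → Prop) := by
    refine ⟨(Equiv.Set.insert hτ).symm, ?_⟩
    rintro (⟨b, hb⟩ | ⟨⟩) (⟨c, hc⟩ | ⟨⟩)
    · simp only [Equiv.Set.insert_symm_apply_inl, Sum.lex_inl_inl]
      exact Iff.rfl
    · simp only [Equiv.Set.insert_symm_apply_inl, Equiv.Set.insert_symm_apply_inr,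
        Sum.Lex.sep, iff_true]
      exact h b hb
    · simp only [Equiv.Set.insert_symm_apply_inl, Equiv.Set.insert_symm_apply_inr,
        Sum.lex_inr_inl, iff_false, not_lt]
      exact (h c hc).le
    · simp [emptyRelation]
  rw [otp, ← Ordinal.type_eq.2 ⟨e⟩, Ordinal.type_sum_lex,
    Ordinal.type_eq_one_of_unique (@emptyRelation PUnit)]
  rfl

theorem scard_eq_card_otp (s : Set Ordinal.{0}) : scard s = (otp s).card :=
  (Ordinal.card_type _).symm

theorem scard_lt_of_subset_Iio {s : Set Ordinal.{0}} {β : Ordinal.{0}} {μ : Cardinal.{0}}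
    (hs : s ⊆ Iio β) (hβ : β < μ.ord) : scard s < Cardinal.lift.{1} μ :=
  calc scard s ≤ #(Iio β) := mk_le_mk_of_subset hs
    _ = Cardinal.lift.{1} β.card := Cardinal.mk_Iio_ordinal β
    _ < Cardinal.lift.{1} μ := Cardinal.lift_lt.2 (Cardinal.lt_ord.1 hβ)

theorem sSup_lt_ord_of_isRegular {ν : Cardinal.{0}} (hν : ν.IsRegular) {s : Set Ordinal.{0}}
    (hs : s ⊆ Iio ν.ord) (hcard : scard s < Cardinal.lift.{1} ν) : sSup s < ν.ord :=
  Ordinal.sSup_lt_of_lt_cof (by rwa [← Ordinal.lift_cof, hν.cof_ord]) hs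

theorem sSup_eq_ord_of_scard_eq {μ : Cardinal.{0}} (hμ : ℵ₀ ≤ μ) {q : Set Ordinal.{0}}
    (hqsub : q ⊆ Iio μ.ord) (hqcard : scard q = Cardinal.lift.{1} μ) : sSup q = μ.ord := by
  refine le_antisymm (csSup_le' fun x hx => (hqsub hx).le) (not_lt.1 fun hlt => ?_)
  have hq : q ⊆ Iio (sSup q + 1) := fun x hx =>
    Order.lt_add_one_iff.2 (le_csSup ⟨μ.ord, fun y hy => (hqsub hy).le⟩ hx)
  exact (scard_lt_of_subset_Iio hq ((Cardinal.isSuccLimit_ord hμ).add_one_lt hlt)).ne hqcard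

/-- Padding `s` with a final segment makes `enumOrd` enumerate it; the enumeration does not leave
`s` before it has used up `|s|` many points. -/
theorem enumOrd_union_Ioi_mem {s : Set Ordinal.{0}} {B : Ordinal.{0}} (hsB : s ⊆ Iic B)
    {i : Ordinal.{0}} (hi : Cardinal.lift.{1} i.card < scard s) :
    Ordinal.enumOrd (s ∪ Ioi B) i ∈ s := by
  have hunb : ¬ BddAbove (s ∪ Ioi B) := fun h => not_bddAbove_Ioi B (h.mono subset_union_right)
  refine (Ordinal.enumOrd_mem hunb i).resolve_right fun hBi => hi.not_ge ?_
  have hsub : s ⊆ Ordinal.enumOrd (s ∪ Ioi B) '' Iio i := fun x hx => by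
    obtain ⟨j, rfl⟩ := Ordinal.enumOrd_surjective hunb (Or.inl hx)
    exact ⟨j, (Ordinal.enumOrd_strictMono hunb).lt_iff_lt.1 ((hsB hx).trans_lt hBi), rfl⟩
  calc scard s ≤ #(Iio i) := (mk_le_mk_of_subset hsub).trans mk_image_le
    _ = Cardinal.lift.{1} i.card := Cardinal.mk_Iio_ordinal i

theorem exists_mem_accSet_otp_inter_Iio {s : Set Ordinal.{0}} (hs : BddAbove s)
    {κ : Cardinal.{0}} (hκ : ℵ₀ ≤ κ) (hcard : Cardinal.lift.{1} κ ≤ scard s) :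
    ∃ τ ∈ accSet s, otp (s ∩ Iio τ) = Ordinal.lift.{1} κ.ord := by
  obtain ⟨B, hB⟩ := hs
  have hunb : ¬ BddAbove (s ∪ Ioi B) := fun h => not_bddAbove_Ioi B (h.mono subset_union_right)
  set e := Ordinal.enumOrd (s ∪ Ioi B)
  have he : StrictMono e := Ordinal.enumOrd_strictMono hunb
  have hes : ∀ i < κ.ord, e i ∈ s := fun i hi => enumOrd_union_Ioi_mem hB
    ((Cardinal.lift_lt.2 (Cardinal.lt_ord.1 hi)).trans_le hcard)
  set S := e '' Iio κ.ord
  have hSne : S.Nonempty := ⟨e 0, 0, Cardinal.ord_pos.2 (aleph0_pos.trans_le hκ), rfl⟩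
  have hSbdd : BddAbove S := ⟨B, by rintro _ ⟨i, hi, rfl⟩; exact hB (hes i hi)⟩
  have hS : s ∩ Iio (sSup S) = S := by
    ext x
    constructor
    · rintro ⟨hx, hxτ⟩
      obtain ⟨_, ⟨i, hi, rfl⟩, hxi⟩ := exists_lt_of_lt_csSup hSne hxτ
      obtain ⟨j, rfl⟩ := Ordinal.enumOrd_surjective hunb (Or.inl hx)
      exact ⟨j, (he.lt_iff_lt.1 hxi).trans hi, rfl⟩
    · rintro ⟨i, hi, rfl⟩
      have hi1 : i + 1 < κ.ord := (Cardinal.isSuccLimit_ord hκ).add_one_lt hi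
      exact ⟨hes i hi, (he (Order.lt_add_one_iff.2 le_rfl)).trans_le
        (le_csSup hSbdd ⟨i + 1, hi1, rfl⟩)⟩
  refine ⟨sSup S, ⟨by rwa [hS], by rw [hS]⟩, ?_⟩
  rw [hS, otp_image_of_strictMono he, otp_Iio]

theorem accSet_mono {s t : Set Ordinal.{0}} (hst : s ⊆ t) : accSet s ⊆ accSet t := by
  rintro α ⟨hne, hα⟩
  have hne' : (t ∩ Iio α).Nonempty := hne.mono (inter_subset_inter_left _ hst)
  refine ⟨hne', le_antisymm ?_ (csSup_le hne' fun x hx => hx.2.le)⟩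
  calc α = sSup (s ∩ Iio α) := hα
    _ ≤ sSup (t ∩ Iio α) :=
      csSup_le_csSup ⟨α, fun x hx => hx.2.le⟩ hne (inter_subset_inter_left _ hst)

theorem IsClosedCond.inter {p r : Set Ordinal.{0}} (hp : IsClosedCond p) (hbdd : BddAbove p)
    (hr : accSet r ∩ Iio (sSup p) ⊆ r) : IsClosedCond (p ∩ r) := by
  rintro α ⟨hα, hlt⟩
  have hlt' : α < sSup p := hlt.trans_le (csSup_le_csSup' hbdd inter_subset_left)
  exact ⟨hp ⟨accSet_mono inter_subset_left hα, hlt'⟩,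
    hr ⟨accSet_mono inter_subset_right hα, hlt'⟩⟩

theorem mem_iUnion_Icc_of_mem_accSet {a b : ℕ → Ordinal.{0}} (hab : ∀ n, a n ≤ b n)
    (hba : ∀ n, b n < a (n + 1)) {α : Ordinal.{0}} (hα : α ∈ accSet (⋃ n, Icc (a n) (b n)))
    (hlt : ∃ m, α < a m) : α ∈ ⋃ n, Icc (a n) (b n) := by
  have ha : StrictMono a := strictMono_nat_of_lt_succ fun n => (hab n).trans_lt (hba n)
  have hb : StrictMono b := strictMono_nat_of_lt_succ fun n => (hba n).trans_le (hab (n + 1))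
  obtain ⟨⟨x, hx, hxα⟩, hαsup⟩ := hα
  obtain ⟨m, hm⟩ := hlt
  obtain ⟨k, hk⟩ := mem_iUnion.1 hx
  obtain ⟨n, -, han, hαn⟩ :=
    ha.monotone.exists_mem_Ico_succ ((ha.monotone (Nat.zero_le k)).trans (hk.1.trans hxα.le)) hm
  refine mem_iUnion.2 ⟨n, han, hαsup.trans_le (csSup_le ⟨x, hx, hxα⟩ ?_)⟩
  rintro y ⟨hy, hyα⟩
  obtain ⟨j, hj⟩ := mem_iUnion.1 hy
  have hjn : j ≤ n := Nat.lt_succ_iff.1 (ha.lt_iff_lt.1 (hj.1.trans_lt (hyα.trans hαn)))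
  exact hj.2.trans (hb.monotone hjn)

theorem IsClosedCond.inter_iUnion_Icc {q : Set Ordinal.{0}} (hq : IsClosedCond q)
    (hqbdd : BddAbove q) {a b : ℕ → Ordinal.{0}} (hab : ∀ n, a n ≤ b n)
    (hba : ∀ n, b n < a (n + 1)) (hcofinal : ∀ α < sSup q, ∃ n, α < a n) :
    IsClosedCond (q ∩ ⋃ n, Icc (a n) (b n)) :=
  hq.inter hqbdd fun α ⟨hα, hlt⟩ => mem_iUnion_Icc_of_mem_accSet hab hba hα (hcofinal α hlt)

theorem exists_otp_inter_Icc_eq {q : Set Ordinal.{0}} (hq : IsClosedCond q)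
    {a : Ordinal.{0}} {κ ν : Cardinal.{0}} (hκ : ℵ₀ ≤ κ) (hν : ν.IsRegular) (hκν : κ < ν)
    (hνq : ν.ord ≤ sSup q) (hcard : Cardinal.lift.{1} κ ≤ scard (q ∩ Ico a ν.ord)) :
    ∃ τ, a ≤ τ ∧ τ < ν.ord ∧ otp (q ∩ Icc a τ) = Ordinal.lift.{1} (κ.ord + 1) := by
  set s := q ∩ Ico a ν.ord
  obtain ⟨τ, hτacc, hτotp⟩ :=
    exists_mem_accSet_otp_inter_Iio ⟨ν.ord, fun x hx => hx.2.2.le⟩ hκ hcard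
  have hτν : τ < ν.ord := hτacc.2.trans_lt <| sSup_lt_ord_of_isRegular hν (fun x hx => hx.1.2.2)
    (by rwa [scard_eq_card_otp, hτotp, ← Ordinal.lift_card, Cardinal.card_ord, Cardinal.lift_lt])
  have hτq : τ ∈ q := hq ⟨accSet_mono inter_subset_left hτacc, hτν.trans_le hνq⟩
  obtain ⟨x, ⟨-, hax, -⟩, hxτ⟩ := hτacc.1
  have haτ : a ≤ τ := hax.trans hxτ.le
  have hins : q ∩ Icc a τ = insert τ (s ∩ Iio τ) := by
    ext y
    simp only [s, mem_inter_iff, mem_Icc, mem_insert_iff, mem_Ico, mem_Iio]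
    constructor
    · rintro ⟨hyq, hay, hyτ⟩
      exact hyτ.eq_or_lt.imp id fun hlt => ⟨⟨hyq, hay, hlt.trans hτν⟩, hlt⟩
    · rintro (rfl | ⟨⟨hyq, hay, -⟩, hyτ⟩)
      exacts [⟨hτq, haτ, le_rfl⟩, ⟨hyq, hay, hyτ.le⟩]
  refine ⟨τ, haτ, hτν, ?_⟩
  rw [hins, otp_insert_of_forall_lt fun y hy => hy.2, hτotp, Ordinal.lift_add, Ordinal.lift_one]

theorem scard_eq_of_otp_eq_ord_add_one {s : Set Ordinal.{0}} {κ : Cardinal.{0}} (hκ : ℵ₀ ≤ κ)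
    (h : otp s = Ordinal.lift.{1} (κ.ord + 1)) : scard s = Cardinal.lift.{1} κ := by
  rw [scard_eq_card_otp, h, ← Ordinal.lift_card, Ordinal.card_add, Cardinal.card_ord,
    Ordinal.card_one, Cardinal.add_one_eq hκ]

theorem exists_lt_ord_of_lt_ord {μ : Cardinal.{0}} {μseq : ℕ → Cardinal.{0}}
    (hsup : μ = ⨆ n, μseq n) {α : Ordinal.{0}} (hα : α < μ.ord) : ∃ n, α < (μseq n).ord := by
  by_contra! h
  exact hα.not_ge (by rw [hsup, Ordinal.iSup_ord]; exact ciSup_le h)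

theorem exists_le_scard_inter_interval {μ : Cardinal.{0}} (hinf : ℵ₀ < μ)
    {μseq : ℕ → Cardinal.{0}} (hmono : StrictMono μseq) (hsup : μ = ⨆ n, μseq n)
    {q : Set Ordinal.{0}} (hqsub : q ⊆ Iio μ.ord) (hqcard : scard q = Cardinal.lift.{1} μ)
    (k n : ℕ) :
    ∃ M ≥ k, Cardinal.lift.{1} (μseq n) ≤ scard (q ∩ interval μseq M) := by
  have hμn : ∀ n, μseq n < μ := fun n =>
    (hmono n.lt_succ_self).trans_le (hsup ▸ le_ciSup Cardinal.bddAbove_of_small (n + 1))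
  by_contra! h
  have hcover : q ⊆ (q ∩ Iio (μseq k).ord) ∪ ⋃ M : Ici k, q ∩ interval μseq M := by
    intro x hx
    refine (lt_or_ge x (μseq k).ord).imp (fun hxk => ⟨hx, hxk⟩) fun hkx => ?_
    obtain ⟨m, hm⟩ := exists_lt_ord_of_lt_ord hsup (hqsub hx)
    obtain ⟨M, hkM, hM⟩ :=
      (Cardinal.ord_strictMono.comp hmono).monotone.exists_mem_Ico_succ hkx hm
    exact mem_iUnion.2 ⟨⟨M, hkM⟩, hx, hM⟩
  have hμ : ℵ₀ ≤ Cardinal.lift.{1} μ := by simpa using hinf.le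
  have hunion : #(⋃ M : Ici k, q ∩ interval μseq M) < Cardinal.lift.{1} μ :=
    calc #(⋃ M : Ici k, q ∩ interval μseq M)
        ≤ Cardinal.lift.{1} #(Ici k) * ⨆ M : Ici k, scard (q ∩ interval μseq M) := by
          simpa only [Cardinal.lift_uzero, scard] using
            Cardinal.mk_iUnion_le_lift fun M : Ici k => q ∩ interval μseq M
      _ ≤ ℵ₀ * Cardinal.lift.{1} (μseq n) := by
          gcongr
          · exact Cardinal.lift_le_aleph0.2 Cardinal.mk_le_aleph0
          · exact ciSup_le' fun M => (h M M.2).le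
      _ < Cardinal.lift.{1} μ :=
          Cardinal.mul_lt_of_lt hμ (by simpa using hinf) (Cardinal.lift_lt.2 (hμn n))
  refine (mk_le_mk_of_subset hcover).not_gt ?_
  calc #(↥(q ∩ Iio (μseq k).ord ∪ ⋃ M : Ici k, q ∩ interval μseq M))
      ≤ scard (q ∩ Iio (μseq k).ord) + #(⋃ M : Ici k, q ∩ interval μseq M) := mk_union_le _ _
    _ < Cardinal.lift.{1} μ := Cardinal.add_lt_of_lt hμ
        (scard_lt_of_subset_Iio inter_subset_right (Cardinal.ord_lt_ord.2 (hμn k))) hunion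
    _ = scard q := hqcard.symm

theorem isNormalCond_iUnion {μseq : ℕ → Cardinal.{0}} (hμ : Monotone μseq) {m : ℕ → ℕ}
    (hm : StrictMono m) {P : ℕ → Set Ordinal.{0}} (hP : ∀ n, P n ⊆ interval μseq (m n))
    (hotp : ∀ n, otp (P n) = Ordinal.lift.{1} ((μseq n).ord + 1)) :
    IsNormalCond μseq (⋃ n, P n) := by
  have hdisj : Pairwise fun i j => Disjoint (interval μseq i) (interval μseq j) :=
    (Cardinal.ord_strictMono.monotone.comp hμ).pairwise_disjoint_on_Ico_succ
  have hindex : ∀ {k j x}, x ∈ P k → x ∈ interval μseq j → m k = j := fun hx hxj =>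
    by_contra fun h => Set.disjoint_left.1 (hdisj h) (hP _ hx) hxj
  have hpiece : ∀ n, (⋃ k, P k) ∩ interval μseq (m n) = P n := fun n => by
    ext x
    refine ⟨fun ⟨hx, hxn⟩ => ?_, fun hx => ⟨mem_iUnion.2 ⟨n, hx⟩, hP n hx⟩⟩
    obtain ⟨k, hk⟩ := mem_iUnion.1 hx
    exact hm.injective (hindex hk hxn) ▸ hk
  refine ⟨m, hm, ?_, fun n => by rw [hpiece n, hotp n]⟩
  ext j
  refine ⟨?_, fun ⟨x, hx, hxj⟩ => ?_⟩
  · rintro ⟨n, rfl⟩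
    have hne : otp (P n) ≠ 0 := by simp [hotp n]
    change ((⋃ k, P k) ∩ interval μseq (m n)).Nonempty
    rw [hpiece n]
    exact nonempty_coe_sort.1 (Ordinal.type_ne_zero_iff_nonempty.1 hne)
  · obtain ⟨k, hk⟩ := mem_iUnion.1 hx
    exact ⟨k, hindex hk hxj⟩

theorem stmt_2_general (μ : Cardinal.{0}) (hinf : Cardinal.aleph0 < μ)
    (μseq : ℕ → Cardinal.{0}) (hseq : GoodSeq μ μseq)
    (q : Set Ordinal.{0}) (hq : InQ μ q) :
    ∃ q' : Set Ordinal.{0}, InQ μ q' ∧ IsNormalCond μseq q' ∧ condLe μ q' q := by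
  obtain ⟨⟨hqsub, hqcard⟩, hqclosed⟩ := hq
  obtain ⟨hmono, hreg, hsup⟩ := hseq
  have hqsSup : sSup q = μ.ord := sSup_eq_ord_of_scard_eq hinf.le hqsub hqcard
  obtain ⟨m, hm, hm_card⟩ := Filter.extraction_forall_of_frequently fun n =>
    Filter.frequently_atTop.2 fun k =>
      exists_le_scard_inter_interval hinf hmono hsup hqsub hqcard k n
  choose τ hτa hτν hτotp using fun n =>
    exists_otp_inter_Icc_eq hqclosed (hreg n).aleph0_le (hreg (m n + 1))
      ((hmono.monotone (hm.id_le n)).trans_lt (hmono (m n).lt_succ_self))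
      (hqsSup ▸ Cardinal.ord_le_ord.2 (hsup ▸ le_ciSup Cardinal.bddAbove_of_small _))
      (hm_card n)
  refine ⟨q ∩ ⋃ n, Icc (μseq (m n)).ord (τ n),
    ⟨⟨inter_subset_left.trans hqsub, ?_⟩, ?_⟩, ?_, ?_⟩
  · refine le_antisymm ((mk_le_mk_of_subset inter_subset_left).trans hqcard.le) ?_
    rw [hsup, Cardinal.lift_iSup Cardinal.bddAbove_of_small]
    exact ciSup_le' fun n =>
      (scard_eq_of_otp_eq_ord_add_one (hreg n).aleph0_le (hτotp n)).ge.trans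
        (mk_le_mk_of_subset (inter_subset_inter_right _ (subset_iUnion_of_subset n le_rfl)))
  · refine hqclosed.inter_iUnion_Icc ⟨μ.ord, fun x hx => (hqsub hx).le⟩ hτa
      (fun n => (hτν n).trans_le (Cardinal.ord_le_ord.2 (hmono.monotone (hm n.lt_succ_self))))
      fun α hα => ?_
    obtain ⟨j, hj⟩ := exists_lt_ord_of_lt_ord hsup (hqsSup ▸ hα)
    exact ⟨j, hj.trans_le (Cardinal.ord_le_ord.2 (hmono.monotone (hm.id_le j)))⟩
  · rw [inter_iUnion]
    exact isNormalCond_iUnion hmono.monotone hm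
      (fun n x hx => ⟨hx.2.1, hx.2.2.trans_lt (hτν n)⟩) hτotp
  · rw [condLe, sdiff_eq_empty.2 inter_subset_left]
    simpa [scard] using hinf.pos

/-- The set of normal conditions is dense in . -/
theorem stmt_2 (μ : Cardinal.{0}) (hinf : Cardinal.aleph0 < μ)
    (hcof : μ.ord.cof = Cardinal.aleph0)
    (μseq : ℕ → Cardinal.{0}) (hseq : GoodSeq μ μseq)
    (q : Set Ordinal.{0}) (hq : InQ μ q) :
    ∃ q' : Set Ordinal.{0}, InQ μ q' ∧ IsNormalCond μseq q' ∧ condLe μ q' q :=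
  stmt_2_general μ hinf μseq hseq q hq
end
end

section
/- Let μₙ be a strictly increasing sequence of infinite cardinals with supremum μ. For normal conditions q in the closed-set poset Q, let a(q) = {n : q ∩ [μₙ, μₙ₊₁) ≠ ∅}. If q₁ ≤ q₂ (i.e. |q₁ \ q₂| < μ) are normal conditions, then a(q₁) \ a(q₂) is finite. -/
open Cardinal Set

noncomputable section

/-! Each block `q₁ ∩ [μ_{m_k}, μ_{m_k+1})` of a normal condition has order type `μ_k + 1`, hence
cardinality at least `μ_k`. If `a(q₁) \ a(q₂)` were infinite, it would contain blocks of
arbitrarily late index, and these blocks lie entirely in `q₁ \ q₂`; so `|q₁ \ q₂| ≥ sup μ_k = μ`. -/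

lemma scard_eq_of_otp_eq_lift {s : Set Ordinal.{0}} {o : Ordinal.{0}}
    (h : otp s = Ordinal.lift.{1} o) : scard s = Cardinal.lift.{1} o.card := by
  rw [scard, ← Ordinal.card_type (· < · : s → s → Prop), ← otp, h, Ordinal.lift_card]

lemma IsNormalCond.exists_mem_lift_le_scard {μseq : ℕ → Cardinal.{0}} (hmono : Monotone μseq)
    {q : Set Ordinal.{0}} (hq : IsNormalCond μseq q) {S : Set ℕ} (hS : S.Infinite)
    (hSq : S ⊆ aSet μseq q) (K : ℕ) :
    ∃ n ∈ S, Cardinal.lift.{1} (μseq K) ≤ scard (q ∩ interval μseq n) := by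
  obtain ⟨m, -, hrange, hotp⟩ := hq
  have hpre : (m ⁻¹' S).Infinite := fun hfin =>
    hS (image_preimage_eq_of_subset (hrange ▸ hSq) ▸ hfin.image m)
  obtain ⟨k, hkS, hKk⟩ := hpre.exists_gt K
  refine ⟨m k, hkS, ?_⟩
  rw [scard_eq_of_otp_eq_lift (hotp k), Cardinal.lift_le, Ordinal.card_add, Cardinal.card_ord]
  exact (hmono hKk.le).trans le_self_add

theorem stmt_5_general (μ : Cardinal.{0}) (μseq : ℕ → Cardinal.{0})
    (hmono : StrictMono μseq)
    (hsup : μ = ⨆ n, μseq n)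
    (q₁ q₂ : Set Ordinal.{0})
    (hn₁ : IsNormalCond μseq q₁)
    (hle : condLe μ q₁ q₂) :
    (aSet μseq q₁ \ aSet μseq q₂).Finite := by
  by_contra hinf
  have hsub : ∀ n ∉ aSet μseq q₂, q₁ ∩ interval μseq n ⊆ q₁ \ q₂ :=
    fun n hn x hx => ⟨hx.1, fun hx₂ => hn ⟨x, hx₂, hx.2⟩⟩
  have hbig : ∀ K, Cardinal.lift.{1} (μseq K) ≤ scard (q₁ \ q₂) := by
    intro K
    obtain ⟨n, hn, hK⟩ := hn₁.exists_mem_lift_le_scard hmono.monotone hinf sdiff_subset K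
    exact hK.trans (mk_le_mk_of_subset (hsub n hn.2))
  refine hle.not_ge ?_
  rw [hsup, lift_iSup bddAbove_of_small]
  exact ciSup_le hbig

/-- If  are normal conditions then  is finite. -/
theorem stmt_5 (μ : Cardinal.{0}) (μseq : ℕ → Cardinal.{0})
    (hmono : StrictMono μseq) (hinfs : ∀ n, Cardinal.aleph0 ≤ μseq n)
    (hsup : μ = ⨆ n, μseq n)
    (q₁ q₂ : Set Ordinal.{0}) (hq₁ : InQ μ q₁) (hq₂ : InQ μ q₂)
    (hn₁ : IsNormalCond μseq q₁) (hn₂ : IsNormalCond μseq q₂)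
    (hle : condLe μ q₁ q₂) :
    (aSet μseq q₁ \ aSet μseq q₂).Finite :=
  stmt_5_general μ μseq hmono hsup q₁ q₂ hn₁ hle
end
end

section
/- With μ = supₙ μₙ singular of cofinality ω and Q the poset of closed size-μ subsets of μ: for every normal condition q ∈ Q and every infinite set t ⊆ a(q), there exists a normal condition q' ≤ q with a(q') = t. -/
open Cardinal Set

noncomputable section

/-!
Enumerate `t` increasingly as `k`. By normality, the block `q ∩ [μ_{k n}, μ_{k n + 1})` has
order type at least `μₙ + 1`, so it has an initial segment `q ∩ [μ_{k n}, b n]` of order type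
exactly `μₙ + 1`. Let `q'` be the union of these segments; it is contained in `q`, so `q' ≤ q`,
and it meets exactly the blocks indexed by `t`. For closedness, a limit point `α < sup q'` of `q'`
sees only finitely many segments below it, hence `α ≤ b N` for the last one; being a limit point
of `q` below `sup q`, it lies in `q`, and therefore in the `N`-th segment.
-/

theorem Ordinal.type_lt_eq_succ_typein_of_isTop {α : Type*} [LinearOrder α] [WellFoundedLT α]
    {a : α} (ha : IsTop a) :
    Ordinal.type (α := α) (· < ·) = Order.succ (Ordinal.typein (α := α) (· < ·) a) := by
  refine eq_of_forall_lt_iff fun o ↦ ⟨fun ho ↦ ?_, fun ho ↦ ?_⟩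
  · obtain ⟨x, rfl⟩ := Ordinal.typein_surj _ ho
    exact Order.lt_succ_iff.2 ((Ordinal.typein_le_typein _).2 (ha x).not_gt)
  · exact (Order.lt_succ_iff.1 ho).trans_lt (Ordinal.typein_lt_type _ _)

lemma otp_inter_Iic {s : Set Ordinal.{0}} {b : Ordinal.{0}} (hb : b ∈ s) :
    otp (s ∩ Iic b) = Order.succ (Ordinal.typein (α := s) (· < ·) ⟨b, hb⟩) := by
  let incl : (s ∩ Iic b : Set Ordinal.{0}) ≤i s :=
    ⟨⟨⟨fun x ↦ ⟨x, x.2.1⟩, fun x y h ↦ Subtype.ext (congrArg Subtype.val h :)⟩, Iff.rfl⟩,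
      fun x y hy ↦ ⟨⟨y, y.2, (show y.1 < x.1 from hy).le.trans x.2.2⟩, rfl⟩⟩
  have htop : IsTop (⟨b, hb, self_mem_Iic⟩ : (s ∩ Iic b : Set Ordinal.{0})) := fun x ↦ x.2.2
  rw [otp, Ordinal.type_lt_eq_succ_typein_of_isTop htop, ← Ordinal.typein_apply incl]
  rfl

lemma exists_otp_inter_Iic_eq {s : Set Ordinal.{0}} {δ : Ordinal.{0}}
    (h : Ordinal.lift.{1} δ < otp s) :
    ∃ b ∈ s, otp (s ∩ Iic b) = Ordinal.lift.{1} (δ + 1) := by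
  obtain ⟨⟨b, hb⟩, hδ⟩ := Ordinal.typein_surj _ h
  refine ⟨b, hb, ?_⟩
  rw [otp_inter_Iic hb, hδ, ← Order.succ_eq_add_one, Ordinal.lift_succ]

lemma scard_eq_of_otp_eq {p : Set Ordinal.{0}} {κ : Cardinal.{0}} (hκ : ℵ₀ ≤ κ)
    (hp : otp p = Ordinal.lift.{1} (κ.ord + 1)) : scard p = Cardinal.lift.{1} κ := by
  rw [scard, ← Ordinal.card_type (α := p) (· < ·), ← otp, hp, ← Ordinal.lift_card,
    Ordinal.card_add_one, Cardinal.card_ord, Cardinal.add_one_eq hκ]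

lemma accSet_mono_s6 {p q : Set Ordinal.{0}} (h : p ⊆ q) : accSet p ⊆ accSet q := by
  rintro α ⟨hne, hα⟩
  have hbdd : BddAbove (q ∩ Iio α) := ⟨α, fun x hx ↦ le_of_lt hx.2⟩
  refine ⟨hne.mono (inter_subset_inter_left _ h), le_antisymm ?_ ?_⟩
  · exact hα.trans_le (csSup_le_csSup hbdd hne (inter_subset_inter_left _ h))
  · exact csSup_le (hne.mono (inter_subset_inter_left _ h)) fun x hx ↦ le_of_lt hx.2

lemma condLe_of_subset {μ : Cardinal.{0}} {p q : Set Ordinal.{0}} (h : p ⊆ q) (hμ : μ ≠ 0) :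
    condLe μ p q := by
  rw [condLe, sdiff_eq_empty.2 h, scard, Cardinal.mk_eq_zero]
  exact pos_iff_ne_zero.2 (Cardinal.lift_eq_zero.not.2 hμ)

lemma InP.of_subset {μ : Cardinal.{0}} {p q : Set Ordinal.{0}} (hq : InP μ q) (h : p ⊆ q)
    (hcard : Cardinal.lift.{1} μ ≤ scard p) : InP μ p :=
  ⟨h.trans hq.1, le_antisymm ((Cardinal.mk_le_mk_of_subset h).trans hq.2.le) hcard⟩

section Intervals

variable {μseq : ℕ → Cardinal.{0}} {x y : Ordinal.{0}} {i j : ℕ}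

lemma lt_of_mem_interval (hmono : StrictMono μseq) (hij : i < j) (hx : x ∈ interval μseq i)
    (hy : y ∈ interval μseq j) : x < y :=
  hx.2.trans_le ((Cardinal.ord_le_ord.2 (hmono.monotone hij)).trans hy.1)

lemma eq_of_mem_interval (hmono : StrictMono μseq) (hi : x ∈ interval μseq i)
    (hj : x ∈ interval μseq j) : i = j := by
  rcases lt_trichotomy i j with h | h | h
  · exact (lt_of_mem_interval hmono h hi hj).false.elim
  · exact h
  · exact (lt_of_mem_interval hmono h hj hi).false.elim

end Intervals

def pieceUnion (μseq : ℕ → Cardinal.{0}) (q : Set Ordinal.{0}) (k : ℕ → ℕ)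
    (b : ℕ → Ordinal.{0}) : Set Ordinal.{0} :=
  ⋃ n, q ∩ interval μseq (k n) ∩ Iic (b n)

section PieceUnion

variable {μseq : ℕ → Cardinal.{0}} {q : Set Ordinal.{0}} {k : ℕ → ℕ} {b : ℕ → Ordinal.{0}}

lemma pieceUnion_subset : pieceUnion μseq q k b ⊆ q :=
  iUnion_subset fun _ ↦ inter_subset_left.trans inter_subset_left

lemma pieceUnion_inter_interval (hmono : StrictMono μseq) (hk : k.Injective) (n : ℕ) :
    pieceUnion μseq q k b ∩ interval μseq (k n) = q ∩ interval μseq (k n) ∩ Iic (b n) := by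
  refine subset_antisymm ?_ fun x hx ↦ ⟨mem_iUnion_of_mem n hx, hx.1.2⟩
  rintro x ⟨hx, hxn⟩
  obtain ⟨j, hxj⟩ := mem_iUnion.1 hx
  obtain rfl := hk (eq_of_mem_interval hmono hxj.1.2 hxn)
  exact hxj

lemma aSet_pieceUnion (hmono : StrictMono μseq) (hb : ∀ n, b n ∈ q ∩ interval μseq (k n)) :
    aSet μseq (pieceUnion μseq q k b) = range k := by
  ext i
  constructor
  · rintro ⟨x, hx, hxi⟩
    obtain ⟨j, hxj⟩ := mem_iUnion.1 hx
    exact ⟨j, eq_of_mem_interval hmono hxj.1.2 hxi⟩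
  · rintro ⟨j, rfl⟩
    exact ⟨b j, mem_iUnion_of_mem j ⟨hb j, self_mem_Iic⟩, (hb j).2⟩

lemma finite_setOf_pieces_below (hmono : StrictMono μseq) (hk : StrictMono k) {α : Ordinal.{0}}
    (hne : (pieceUnion μseq q k b).Nonempty) (hα : α < sSup (pieceUnion μseq q k b)) :
    {n | (q ∩ interval μseq (k n) ∩ Iic (b n) ∩ Iio α).Nonempty}.Finite := by
  by_contra hinf
  refine hα.not_ge (csSup_le hne fun x hx ↦ ?_)
  obtain ⟨j, hxj⟩ := mem_iUnion.1 hx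
  obtain ⟨n, ⟨y, hy, hyα⟩, hjn⟩ := Set.Infinite.exists_gt hinf j
  exact (lt_of_mem_interval hmono (hk hjn) hxj.1.2 hy.1.2 |>.trans hyα).le

lemma isClosedCond_pieceUnion (hmono : StrictMono μseq) (hk : StrictMono k)
    (hb : ∀ n, b n ∈ q ∩ interval μseq (k n)) (hq : IsClosedCond q) (hbdd : BddAbove q) :
    IsClosedCond (pieceUnion μseq q k b) := by
  rintro α ⟨hacc, hαlt⟩
  set T := {n | (q ∩ interval μseq (k n) ∩ Iic (b n) ∩ Iio α).Nonempty}
  have hTne : T.Nonempty := by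
    obtain ⟨x, hx, hxα⟩ := hacc.1
    obtain ⟨j, hxj⟩ := mem_iUnion.1 hx
    exact ⟨j, x, hxj, hxα⟩
  have hTfin : T.Finite := finite_setOf_pieces_below hmono hk (hacc.1.mono inter_subset_left) hαlt
  set N := sSup T
  obtain ⟨y, hyN, hyα⟩ : N ∈ T := Nat.sSup_mem hTne hTfin.bddAbove
  have hαb : α ≤ b N := by
    rw [hacc.2]
    refine csSup_le hacc.1 fun x ⟨hx, hxα⟩ ↦ ?_
    obtain ⟨j, hxj⟩ := mem_iUnion.1 hx
    rcases (le_csSup hTfin.bddAbove ⟨x, hxj, hxα⟩ : j ≤ N).lt_or_eq with hjN | rfl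
    · exact (lt_of_mem_interval hmono (hk hjN) hxj.1.2 (hb N).2).le
    · exact hxj.2
  have hαq : α ∈ q := by
    refine hq ⟨accSet_mono_s6 pieceUnion_subset hacc, ?_⟩
    exact hαb.trans_lt (lt_of_mem_interval hmono (hk N.lt_succ_self) (hb N).2 (hb (N + 1)).2)
      |>.trans_le (le_csSup hbdd (hb (N + 1)).1)
  exact mem_iUnion_of_mem N
    ⟨⟨hαq, hyN.1.2.1.trans hyα.le, hαb.trans_lt (hb N).2.2⟩, hαb⟩

end PieceUnion

lemma IsNormalCond.ord_lt_otp {μseq : ℕ → Cardinal.{0}} {q : Set Ordinal.{0}}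
    (hmono : StrictMono μseq) (hq : IsNormalCond μseq q) {k : ℕ → ℕ} (hk : StrictMono k)
    (hkq : ∀ n, k n ∈ aSet μseq q) (n : ℕ) :
    Ordinal.lift.{1} (μseq n).ord < otp (q ∩ interval μseq (k n)) := by
  obtain ⟨m, hm, hmq, hotp⟩ := hq
  choose g hg using fun n ↦ (hmq ▸ hkq n : k n ∈ range m)
  have hgmono : StrictMono g := fun i j hij ↦ hm.lt_iff_lt.1 (by rw [hg, hg]; exact hk hij)
  rw [← hg, hotp, Ordinal.lift_lt, ← Order.succ_eq_add_one, Order.lt_succ_iff]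
  exact Cardinal.ord_le_ord.2 (hmono.monotone hgmono.le_apply)

theorem stmt_6_general (μ : Cardinal.{0}) (hinf : Cardinal.aleph0 < μ)
    (μseq : ℕ → Cardinal.{0}) (hseq : GoodSeq μ μseq)
    (q : Set Ordinal.{0}) (hq : InQ μ q) (hn : IsNormalCond μseq q)
    (t : Set ℕ) (ht : t ⊆ aSet μseq q) (htinf : t.Infinite) :
    ∃ q' : Set Ordinal.{0}, InQ μ q' ∧ IsNormalCond μseq q' ∧
      condLe μ q' q ∧ aSet μseq q' = t := by
  classical
  obtain ⟨hmono, hreg, hsup⟩ := hseq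
  have : Infinite t := htinf.to_subtype
  let k := Nat.orderEmbeddingOfSet t
  have hkt : range k = t := Nat.orderEmbeddingOfSet_range t
  have hk : StrictMono k := k.strictMono
  choose b hb hotp using fun n ↦ exists_otp_inter_Iic_eq
    (hn.ord_lt_otp hmono hk (fun n ↦ ht (hkt ▸ mem_range_self n)) n)
  let q' := pieceUnion μseq q k b
  have hpiece (n : ℕ) : q' ∩ interval μseq (k n) = q ∩ interval μseq (k n) ∩ Iic (b n) :=
    pieceUnion_inter_interval hmono hk.injective n
  have hcard : Cardinal.lift.{1} μ ≤ scard q' := by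
    rw [hsup, Cardinal.lift_iSup Cardinal.bddAbove_of_small]
    refine ciSup_le fun n ↦ ?_
    rw [← scard_eq_of_otp_eq (hreg n).aleph0_le (hotp n), ← hpiece]
    exact Cardinal.mk_le_mk_of_subset inter_subset_left
  refine ⟨q', ⟨hq.1.of_subset pieceUnion_subset hcard, ?_⟩, ⟨k, hk, ?_, ?_⟩,
    condLe_of_subset pieceUnion_subset (aleph0_pos.trans hinf).ne', ?_⟩
  · exact isClosedCond_pieceUnion hmono hk hb hq.2 ⟨μ.ord, fun x hx ↦ (hq.1.1 hx).le⟩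
  · exact (aSet_pieceUnion hmono hb).symm
  · exact fun n ↦ (hpiece n).symm ▸ hotp n
  · rw [aSet_pieceUnion hmono hb, hkt]

/-- For every normal condition  and every infinite ,
there is a normal condition  with . -/
theorem stmt_6 (μ : Cardinal.{0}) (hinf : Cardinal.aleph0 < μ)
    (hcof : μ.ord.cof = Cardinal.aleph0)
    (μseq : ℕ → Cardinal.{0}) (hseq : GoodSeq μ μseq)
    (q : Set Ordinal.{0}) (hq : InQ μ q) (hn : IsNormalCond μseq q)
    (t : Set ℕ) (ht : t ⊆ aSet μseq q) (htinf : t.Infinite) :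
    ∃ q' : Set Ordinal.{0}, InQ μ q' ∧ IsNormalCond μseq q' ∧
      condLe μ q' q ∧ aSet μseq q' = t :=
  stmt_6_general μ hinf μseq hseq q hq hn t ht htinf
end
end

section
/- (Trichotomy) Let A be an infinite set, I an ideal over A, and λ > |A|⁺ a regular cardinal. If ⟨f_α : α < λ⟩ is a sequence of ordinal-valued functions on A that is increasing in the order <_I (f <_I g iff {a : f(a) ≥ g(a)} ∈ I), then at least one of the following holds: (Good) the sequence has an exact upper bound f with cf(f(a)) > |A| for all a ∈ A; (Bad) there are sets S(a) ⊆ Ord with |S(a)| ≤ |A| for a ∈ A, and an ultrafilter D on A disjoint from I, such that for every α < λ there exist h_α ∈ ∏_a S(a) and β < λ with f_α <_D h_α <_D f_β; (Ugly) there is g : A → Ord such that, setting t_α = {a ∈ A : f_α(a) > g(a)}, the sequence ⟨t_α : α < λ⟩ does not eventually stabilize modulo I. -/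
open Cardinal Set

noncomputable section

/-- `f <_I g` : the set where `f` is not below `g` is in the ideal `I`. -/
def ltIdeal {A : Type} (I : Set (Set A)) (f g : A → Ordinal.{0}) : Prop :=
  {a | g a ≤ f a} ∈ I

/-!
Replace `I` by its dual filter `F`, so that `f <_I g` reads `∀ᶠ a in F, f a < g a`, and assume
neither Ugly nor Bad.

For `S : A → Set Ordinal` with `|S a| ≤ |A|` containing a strict bound of the sequence, let
`h_α a` be the least element of `S a` above `f α a`. Since Ugly fails, `{a | h_α a < f β a}`
stabilises mod `F` as `β → λ`, and the stable sets decrease mod `F` in `α`. If all were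
`F`-positive, an ultrafilter containing them all would witness Bad; so some `h_α` is an upper
bound, and then `h_γ =ᶠ h_α` for all `γ ≥ α`.

If there were no exact upper bound, we could choose below this eventual value an unbounded `w`,
add it to `S`, and repeat `|A|⁺` times. As `cf λ > |A|⁺`, for cofinally many `α` the function
`h_α` of the final family already takes values in one stage `S_r`, so it agrees with the `h_α` of
`S_r`. But the witness `w_r`, which belongs to the final family, lies strictly between `f_α` and
`h_α` on an `F`-positive set, contradicting the minimality of `h_α`.

In an exact upper bound `g`, the points where `g a` is zero or a successor form an `F`-null set
by exactness, and so do the limits of cofinality `≤ |A|`, since cofinal subsets of size `≤ |A|`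
would witness Bad. Changing `g` on this null set gives the Good alternative.
-/

namespace Trichotomy

open Filter Order

variable {A : Type} {F : Filter A} {f : Ordinal.{0} → A → Ordinal.{0}} {lo : Ordinal.{0}}

section Notions

variable (F f lo)

def IncreasingMod : Prop :=
  ∀ α β, α < β → β < lo → ∀ᶠ a in F, f α a < f β a

def IsUpperBoundMod (g : A → Ordinal.{0}) : Prop :=
  ∀ α < lo, ∀ᶠ a in F, f α a < g a

def IsExactUpperBound (g : A → Ordinal.{0}) : Prop :=
  IsUpperBoundMod F f lo g ∧
    ∀ h : A → Ordinal.{0}, (∀ᶠ a in F, h a < g a) → ∃ α < lo, ∀ᶠ a in F, h a < f α a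

def Stabilizes (g : A → Ordinal.{0}) : Prop :=
  ∃ α₀ < lo, ∀ β, α₀ ≤ β → β < lo → ∀ᶠ a in F, (g a < f β a ↔ g a < f α₀ a)

def IsBad : Prop :=
  ∃ S : A → Set Ordinal.{0}, (∀ a, #(S a) ≤ Cardinal.lift.{1} #A) ∧
    ∃ D : Ultrafilter A, ↑D ≤ F ∧ ∀ α < lo, ∃ h : A → Ordinal.{0}, (∀ a, h a ∈ S a) ∧
      ∃ β < lo, {a | f α a < h a} ∈ D ∧ {a | h a < f β a} ∈ D

end Notions

theorem exists_ultrafilter_of_antitone_mod {ι : Type*} [Preorder ι] [IsDirectedOrder ι]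
    [Nonempty ι] {W : ι → Set A} (hW : ∀ i j, i ≤ j → ∀ᶠ a in F, a ∈ W j → a ∈ W i)
    (hpos : ∀ i, ∃ᶠ a in F, a ∈ W i) : ∃ D : Ultrafilter A, ↑D ≤ F ∧ ∀ i, W i ∈ D := by
  have hdir : Directed (· ≥ ·) fun i => F ⊓ 𝓟 (W i) := fun i j => by
    obtain ⟨k, hik, hjk⟩ := directed_of (· ≤ ·) i j
    exact ⟨k, le_inf inf_le_left (le_principal_iff.2 (mem_inf_principal.2 (hW i k hik))),
      le_inf inf_le_left (le_principal_iff.2 (mem_inf_principal.2 (hW j k hjk)))⟩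
  have := iInf_neBot_of_directed' hdir fun i => frequently_iff_neBot.1 (hpos i)
  refine ⟨Ultrafilter.of (⨅ i, F ⊓ 𝓟 (W i)), fun s hs => ?_, fun i => ?_⟩
  · exact Ultrafilter.of_le _ (mem_iInf_of_mem (Classical.arbitrary ι) (mem_inf_of_left hs))
  · exact Ultrafilter.of_le _ (mem_iInf_of_mem i (mem_inf_of_right (mem_principal_self _)))

section NextIn

variable {β : Type*} [ConditionallyCompleteLinearOrderBot β]

-- junk value `⊥` when no element of `s` lies above `x`
def nextIn (s : Set β) (x : β) : β := sInf {y ∈ s | x < y}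

theorem nextIn_mem_and_lt [WellFoundedLT β] {s : Set β} {x : β} (h : ∃ y ∈ s, x < y) :
    nextIn s x ∈ s ∧ x < nextIn s x :=
  csInf_mem h

theorem nextIn_le {s : Set β} {x y : β} (hy : y ∈ s) (hxy : x < y) : nextIn s x ≤ y :=
  csInf_le' ⟨hy, hxy⟩

theorem nextIn_mono [WellFoundedLT β] {s : Set β} {x x' : β} (h : ∃ y ∈ s, x' < y)
    (hx : x ≤ x') : nextIn s x ≤ nextIn s x' :=
  nextIn_le (nextIn_mem_and_lt h).1 (hx.trans_lt (nextIn_mem_and_lt h).2)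

theorem nextIn_eq_of_subset [WellFoundedLT β] {s t : Set β} {x : β} (hst : s ⊆ t)
    (ht : ∃ y ∈ t, x < y) (hs : nextIn t x ∈ s) : nextIn s x = nextIn t x := by
  have hs' := nextIn_mem_and_lt ⟨_, hs, (nextIn_mem_and_lt ht).2⟩
  exact le_antisymm (nextIn_le hs (nextIn_mem_and_lt ht).2) (nextIn_le (hst hs'.1) hs'.2)

end NextIn

def supSucc (f : Ordinal.{0} → A → Ordinal.{0}) (lo : Ordinal.{0}) (a : A) : Ordinal.{0} :=
  succ (⨆ α : Iio lo, f α a)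

theorem lt_supSucc {α : Ordinal.{0}} (hα : α < lo) (a : A) : f α a < supSucc f lo a :=
  lt_succ_iff.2 (Ordinal.le_iSup (fun α : Iio lo => f α a) ⟨α, hα⟩)

def nextSeq (f : Ordinal.{0} → A → Ordinal.{0}) (S : A → Set Ordinal.{0}) (α : Ordinal.{0}) :
    A → Ordinal.{0} :=
  fun a => nextIn (S a) (f α a)

section NextSeq

variable {S : A → Set Ordinal.{0}}

theorem nextSeq_mem_and_lt (hS : ∀ a, supSucc f lo a ∈ S a) {α : Ordinal.{0}} (hα : α < lo)
    (a : A) : nextSeq f S α a ∈ S a ∧ f α a < nextSeq f S α a :=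
  nextIn_mem_and_lt ⟨_, hS a, lt_supSucc hα a⟩

theorem nextSeq_mono (hinc : IncreasingMod F f lo) (hS : ∀ a, supSucc f lo a ∈ S a)
    {α β : Ordinal.{0}} (hαβ : α ≤ β) (hβ : β < lo) :
    ∀ᶠ a in F, nextSeq f S α a ≤ nextSeq f S β a := by
  rcases hαβ.eq_or_lt with rfl | hlt
  · exact Eventually.of_forall fun a => le_rfl
  · exact (hinc α β hlt hβ).mono fun a ha => nextIn_mono ⟨_, hS a, lt_supSucc hβ a⟩ ha.le

theorem nextSeq_eventuallyEq_of_isUpperBoundMod (hinc : IncreasingMod F f lo)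
    (hS : ∀ a, supSucc f lo a ∈ S a) {α γ : Ordinal.{0}}
    (hub : IsUpperBoundMod F f lo (nextSeq f S α)) (hαγ : α ≤ γ) (hγ : γ < lo) :
    nextSeq f S γ =ᶠ[F] nextSeq f S α := by
  filter_upwards [nextSeq_mono hinc hS hαγ hγ, hub γ hγ] with a hle hlt
  exact le_antisymm (nextIn_le (nextSeq_mem_and_lt hS (hαγ.trans_lt hγ) a).1 hlt) hle

end NextSeq

theorem isUpperBoundMod_of_stabilizes (hlo : IsSuccLimit lo) (hinc : IncreasingMod F f lo)
    {g : A → Ordinal.{0}} {α₀ : Ordinal.{0}} (hα₀ : α₀ < lo)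
    (hst : ∀ β, α₀ ≤ β → β < lo → ∀ᶠ a in F, (g a < f β a ↔ g a < f α₀ a))
    (hnull : ∀ᶠ a in F, f α₀ a ≤ g a) : IsUpperBoundMod F f lo g := by
  intro γ hγ
  have hβ : succ (max γ α₀) < lo := hlo.succ_lt (max_lt hγ hα₀)
  filter_upwards [hinc γ _ ((le_max_left γ α₀).trans_lt (lt_succ _)) hβ,
    hst _ ((le_max_right γ α₀).trans (le_succ _)) hβ, hnull] with a hγβ hiff hα₀a
  exact hγβ.trans_le (not_lt.1 fun h => (hiff.1 h).not_ge hα₀a)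

theorem exists_isUpperBoundMod_nextSeq (hlo : IsSuccLimit lo) (hinc : IncreasingMod F f lo)
    (hstab : ∀ g, Stabilizes F f lo g) {S : A → Set Ordinal.{0}}
    (hS : ∀ a, supSucc f lo a ∈ S a) (hcard : ∀ a, #(S a) ≤ Cardinal.lift.{1} #A)
    (hbad : ¬IsBad F f lo) : ∃ α < lo, IsUpperBoundMod F f lo (nextSeq f S α) := by
  choose st hst_lt hst using hstab
  -- `E α` is the set to which `{a | nextSeq f S α a < f β a}` stabilises mod `F`
  set E : Ordinal.{0} → Set A := fun α => {a | nextSeq f S α a < f (st (nextSeq f S α)) a}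
  by_contra! hne
  have hpos : ∀ α : Iio lo, ∃ᶠ a in F, a ∈ E α := fun α => by
    by_contra h
    exact hne α α.2 (isUpperBoundMod_of_stabilizes hlo hinc (hst_lt _) (hst _)
      ((not_frequently.1 h).mono fun a ha => not_lt.1 ha))
  have hanti : ∀ α α' : Iio lo, α ≤ α' → ∀ᶠ a in F, a ∈ E α' → a ∈ E α := by
    intro α α' hαα'
    have hβ := max_lt (hst_lt (nextSeq f S α)) (hst_lt (nextSeq f S α'))
    filter_upwards [hst _ _ (le_max_left _ _) hβ, hst _ _ (le_max_right _ _) hβ,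
      nextSeq_mono hinc hS hαα' α'.2] with a hα hα' hle ha
    exact hα.1 (hle.trans_lt (hα'.2 ha))
  have : Nonempty (Iio lo) := ⟨⟨0, hlo.bot_lt⟩⟩
  obtain ⟨D, hDF, hDE⟩ := exists_ultrafilter_of_antitone_mod hanti hpos
  refine hbad ⟨S, hcard, D, hDF, fun α hα => ?_⟩
  have hα' : succ α < lo := hlo.succ_lt hα
  refine ⟨nextSeq f S (succ α), fun a => (nextSeq_mem_and_lt hS hα' a).1, _, hst_lt _, ?_,
    hDE ⟨_, hα'⟩⟩
  exact hDF ((hinc α _ (lt_succ α) hα').mono fun a ha =>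
    ha.trans (nextSeq_mem_and_lt hS hα' a).2)

variable (F f lo) in
def EscapesNextSeq (S : A → Set Ordinal.{0}) (w : A → Ordinal.{0}) : Prop :=
  ∃ H : A → Ordinal.{0}, (∃ α₁ < lo, ∀ α, α₁ ≤ α → α < lo → nextSeq f S α =ᶠ[F] H) ∧
    (∀ᶠ a in F, w a < H a) ∧ ∀ γ < lo, ∃ᶠ a in F, f γ a < w a

theorem exists_escapesNextSeq (hlo : IsSuccLimit lo) (hinc : IncreasingMod F f lo)
    (hstab : ∀ g, Stabilizes F f lo g) (hbad : ¬IsBad F f lo)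
    (hexact : ∀ g, ¬IsExactUpperBound F f lo g) {S : A → Set Ordinal.{0}}
    (hS : ∀ a, supSucc f lo a ∈ S a) (hcard : ∀ a, #(S a) ≤ Cardinal.lift.{1} #A) :
    ∃ w, EscapesNextSeq F f lo S w := by
  obtain ⟨α₁, hα₁, hub⟩ := exists_isUpperBoundMod_nextSeq hlo hinc hstab hS hcard hbad
  have : ¬∀ h : A → Ordinal.{0}, (∀ᶠ a in F, h a < nextSeq f S α₁ a) →
      ∃ γ < lo, ∀ᶠ a in F, h a < f γ a := fun h => hexact _ ⟨hub, h⟩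
  push Not at this
  obtain ⟨w, hw, hunb⟩ := this
  refine ⟨w, _, ⟨α₁, hα₁, fun α h1 h2 =>
    nextSeq_eventuallyEq_of_isUpperBoundMod hinc hS hub h1 h2⟩, hw, fun γ hγ => ?_⟩
  have hγ' : succ γ < lo := hlo.succ_lt hγ
  exact ((hunb _ hγ').and_eventually (hinc γ _ (lt_succ γ) hγ')).mono
    fun a ha => ha.2.trans_le ha.1

theorem EscapesNextSeq.not_cofinal_eq {S T : A → Set Ordinal.{0}} {w : A → Ordinal.{0}}
    (hw : EscapesNextSeq F f lo S w) (hwT : ∀ a, w a ∈ T a) :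
    ¬∀ γ < lo, ∃ α, γ ≤ α ∧ α < lo ∧ nextSeq f T α = nextSeq f S α := by
  intro hcof
  obtain ⟨H, ⟨α₁, hα₁, hH⟩, hwH, hunb⟩ := hw
  obtain ⟨α, h1, h2, heq⟩ := hcof α₁ hα₁
  obtain ⟨a, hfw, hwHa, hHa⟩ := ((hunb α h2).and_eventually (hwH.and (hH α h1 h2))).exists
  have := (nextIn_le (hwT a) hfw).trans_lt hwHa
  rw [← hHa, ← congrFun heq a] at this
  exact this.false

section Stage

variable {c : A → Ordinal.{0}} {W : Ordinal.{0} → A → Ordinal.{0}} {r R : Ordinal.{0}}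

def stage (c : A → Ordinal.{0}) (W : Ordinal.{0} → A → Ordinal.{0}) (r : Ordinal.{0}) (a : A) :
    Set Ordinal.{0} :=
  insert (c a) (range fun r' : Iio r => W r' a)

theorem exists_eq_stage (c : A → Ordinal.{0}) (step : (A → Set Ordinal.{0}) → A → Ordinal.{0}) :
    ∃ W : Ordinal.{0} → A → Ordinal.{0}, ∀ r, W r = step (stage c W r) :=
  ⟨WellFoundedLT.fix (motive := fun _ => A → Ordinal.{0}) fun r rec =>
      step fun a => insert (c a) (range fun r' : Iio r => rec r' r'.2 a),
    fun r => WellFoundedLT.fix_eq _ r⟩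

theorem self_mem_stage {a : A} : c a ∈ stage c W r a :=
  mem_insert _ _

theorem mem_stage_of_lt {r' : Ordinal.{0}} (h : r' < r) (a : A) : W r' a ∈ stage c W r a :=
  mem_insert_of_mem _ ⟨⟨r', h⟩, rfl⟩

theorem stage_mono {r' : Ordinal.{0}} (h : r ≤ r') (a : A) : stage c W r a ⊆ stage c W r' a :=
  insert_subset_insert fun _ ⟨r'', hr''⟩ => ⟨⟨r'', r''.2.trans_le h⟩, hr''⟩

theorem mk_stage_le [Infinite A] (hr : r.card ≤ #A) (a : A) :
    #(stage c W r a) ≤ Cardinal.lift.{1} #A := by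
  have hrange : #(range fun r' : Iio r => W r' a) ≤ Cardinal.lift.{1} #A :=
    mk_range_le.trans ((mk_Iio_ordinal r).trans_le (lift_le.2 hr))
  calc #(stage c W r a) ≤ Cardinal.lift.{1} #A + 1 :=
        mk_insert_le.trans (add_le_add_left hrange 1)
    _ = Cardinal.lift.{1} #A := add_one_eq (aleph0_le_lift.2 (aleph0_le_mk A))

theorem exists_lt_forall_mem_stage (hR : #A < R.cof) {x : A → Ordinal.{0}}
    (hx : ∀ a, x a ∈ stage c W R a) : ∃ r < R, ∀ a, x a ∈ stage c W r a := by
  have : ∀ a, ∃ r < R, x a ∈ stage c W (r + 1) a := by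
    intro a
    rcases hx a with h | ⟨⟨r, hr⟩, h⟩
    · exact ⟨0, Ordinal.cof_pos.1 (zero_le.trans_lt hR), h ▸ self_mem_stage⟩
    · exact ⟨r, hr, h ▸ mem_stage_of_lt (lt_add_one r) a⟩
  choose r hr hmem using this
  exact ⟨⨆ a, r a + 1, Ordinal.iSup_add_one_lt_of_lt_cof hR hr,
    fun a => stage_mono (Ordinal.le_iSup (fun a => r a + 1) a) a (hmem a)⟩

end Stage

theorem exists_cofinal_of_forall_exists_lt {R : Ordinal.{0}} (hR : R.card < lo.cof)
    {P : Ordinal.{0} → Ordinal.{0} → Prop} (hP : ∀ α < lo, ∃ r < R, P α r) :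
    ∃ r < R, ∀ γ < lo, ∃ α, γ ≤ α ∧ α < lo ∧ P α r := by
  have hcover : IsCofinal (⋃ r : Iio R, {α : Iio lo | P α r}) := fun α => by
    obtain ⟨r, hr, h⟩ := hP α α.2
    exact ⟨α, mem_iUnion.2 ⟨⟨r, hr⟩, h⟩, le_rfl⟩
  have hcard : #(Iio R) < Order.cof (Iio lo) := by
    rw [mk_Iio_ordinal, Ordinal.cof_Iio, ← Ordinal.lift_cof]
    exact lift_lt.2 hR
  obtain ⟨⟨r, hr⟩, hcof⟩ := isCofinal_of_isCofinal_iUnion hcover hcard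
  refine ⟨r, hr, fun γ hγ => ?_⟩
  obtain ⟨α, hα, hγα⟩ := hcof ⟨γ, hγ⟩
  exact ⟨α, hγα, α.2, hα⟩

theorem exists_isExactUpperBound [Infinite A] (hcof : succ #A < lo.cof)
    (hinc : IncreasingMod F f lo) (hstab : ∀ g, Stabilizes F f lo g) (hbad : ¬IsBad F f lo) :
    ∃ g, IsExactUpperBound F f lo g := by
  have hlo : IsSuccLimit lo := Ordinal.one_lt_cof_iff.1
    (((one_lt_aleph0.trans_le (aleph0_le_mk A)).trans (lt_succ _)).trans hcof)
  by_contra! hexact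
  have hstep : ∀ S : A → Set Ordinal.{0}, ∃ w, (∀ a, supSucc f lo a ∈ S a) →
      (∀ a, #(S a) ≤ Cardinal.lift.{1} #A) → EscapesNextSeq F f lo S w := by
    intro S
    by_cases hS : (∀ a, supSucc f lo a ∈ S a) ∧ ∀ a, #(S a) ≤ Cardinal.lift.{1} #A
    · obtain ⟨w, hw⟩ := exists_escapesNextSeq hlo hinc hstab hbad hexact hS.1 hS.2
      exact ⟨w, fun _ _ => hw⟩
    · exact ⟨0, fun h1 h2 => (hS ⟨h1, h2⟩).elim⟩
  choose step hstep using hstep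
  -- iterate `step` along `|A|⁺`, feeding it all earlier witnesses
  obtain ⟨W, hW⟩ := exists_eq_stage (supSucc f lo) step
  set R := (succ #A).ord
  have hRcof : R.cof = succ #A := (isRegular_succ (aleph0_le_mk A)).cof_ord
  have hesc : ∀ r < R, EscapesNextSeq F f lo (stage (supSucc f lo) W r) (W r) := fun r hr => by
    rw [hW r]
    exact hstep _ (fun a => self_mem_stage) (mk_stage_le (lt_succ_iff.1 (lt_ord.1 hr)))
  obtain ⟨r, hr, hcofinal⟩ : ∃ r < R, ∀ γ < lo, ∃ α, γ ≤ α ∧ α < lo ∧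
      ∀ a, nextSeq f (stage (supSucc f lo) W R) α a ∈ stage (supSucc f lo) W r a :=
    exists_cofinal_of_forall_exists_lt (by rwa [card_ord]) fun α hα =>
      exists_lt_forall_mem_stage (hRcof ▸ lt_succ _)
        fun a => (nextSeq_mem_and_lt (fun a => self_mem_stage) hα a).1
  refine (hesc r hr).not_cofinal_eq (T := stage (supSucc f lo) W R)
    (fun a => mem_stage_of_lt hr a) fun γ hγ => ?_
  obtain ⟨α, hγα, hα, hmem⟩ := hcofinal γ hγ
  exact ⟨α, hγα, hα, funext fun a => (nextIn_eq_of_subset (stage_mono hr.le a)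
    ⟨_, self_mem_stage, lt_supSucc hα a⟩ (hmem a)).symm⟩

theorem exists_cofinal_subset_Iio (o : Ordinal.{0}) :
    ∃ T ⊆ Iio o, #T = Cardinal.lift.{1} o.cof ∧ ∀ y < o, ∃ x ∈ T, y ≤ x := by
  obtain ⟨s, hs, hcard⟩ := Order.exists_cof_eq (Iio o)
  refine ⟨Subtype.val '' s, image_subset_iff.2 fun x _ => x.2, ?_, fun y hy => ?_⟩
  · rw [mk_image_eq Subtype.val_injective, hcard, Ordinal.cof_Iio, Ordinal.lift_cof]
  · obtain ⟨x, hx, hyx⟩ := hs ⟨y, hy⟩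
    exact ⟨x, mem_image_of_mem _ hx, hyx⟩

namespace IsExactUpperBound

variable {g : A → Ordinal.{0}}

theorem congr {g' : A → Ordinal.{0}} (hg : IsExactUpperBound F f lo g) (h : g =ᶠ[F] g') :
    IsExactUpperBound F f lo g' :=
  ⟨fun α hα => by filter_upwards [hg.1 α hα, h] with a h1 h2; rwa [← h2],
    fun k hk => hg.2 k (by filter_upwards [hk, h] with a h1 h2; rwa [h2])⟩

theorem eventually_isSuccLimit (hg : IsExactUpperBound F f lo g) (hlo : 0 < lo) :
    ∀ᶠ a in F, IsSuccLimit (g a) := by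
  classical
  have hne : ∀ᶠ a in F, g a ≠ 0 := (hg.1 0 hlo).mono fun a ha => (zero_le.trans_lt ha).ne'
  set p : A → Ordinal.{0} := fun a => if IsSuccLimit (g a) then 0 else Ordinal.pred (g a)
  have hp : ∀ᶠ a in F, p a < g a := hne.mono fun a ha => by
    rcases Ordinal.zero_or_succ_or_isSuccLimit (g a) with h | ⟨b, hb⟩ | h
    · exact absurd h ha
    · simp [p, ← hb]
    · simpa [p, h] using h.bot_lt
  obtain ⟨β, hβ, hpβ⟩ := hg.2 p hp
  filter_upwards [hne, hpβ, hg.1 β hβ] with a h0 hpa hβa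
  rcases Ordinal.zero_or_succ_or_isSuccLimit (g a) with h | ⟨b, hb⟩ | h
  · exact absurd h h0
  · have hpb : p a = b := by simp [p, ← hb]
    rw [hpb] at hpa
    exact absurd (hb ▸ succ_le_of_lt hpa) (not_le.2 hβa)
  · exact h

theorem isBad_of_frequently_cof_le [Infinite A] (hg : IsExactUpperBound F f lo g)
    (hlim : ∀ᶠ a in F, IsSuccLimit (g a)) (hsmall : ∃ᶠ a in F, (g a).cof ≤ #A) :
    IsBad F f lo := by
  have := frequently_iff_neBot.1 hsmall
  set D := Ultrafilter.of (F ⊓ 𝓟 {a | (g a).cof ≤ #A})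
  have hDF : ↑D ≤ F := (Ultrafilter.of_le _).trans inf_le_left
  have hDsmall : {a | (g a).cof ≤ #A} ∈ D :=
    Ultrafilter.of_le _ (mem_inf_of_right (mem_principal_self _))
  choose T hTsub hTcard hTcof using exists_cofinal_subset_Iio
  set S : A → Set Ordinal.{0} := fun a => if (g a).cof ≤ #A then insert 0 (T (g a)) else {0}
  have hA : ℵ₀ ≤ Cardinal.lift.{1} #A := aleph0_le_lift.2 (aleph0_le_mk A)
  have hScard : ∀ a, #(S a) ≤ Cardinal.lift.{1} #A := fun a => by
    by_cases h : (g a).cof ≤ #A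
    · simp only [S, if_pos h]
      calc #(insert 0 (T (g a)) : Set Ordinal.{0}) ≤ Cardinal.lift.{1} #A + 1 :=
            mk_insert_le.trans (add_le_add_left ((hTcard _).trans_le (lift_le.2 h)) 1)
        _ = Cardinal.lift.{1} #A := add_one_eq hA
    · simpa [S, h] using one_le_aleph0.trans hA
  refine ⟨S, hScard, D, hDF, fun α hα => ?_⟩
  have : ∀ a, ∃ x ∈ S a, (IsSuccLimit (g a) → (g a).cof ≤ #A → f α a < g a → f α a < x) ∧
      (g a ≠ 0 → x < g a) := by
    intro a
    by_cases h : IsSuccLimit (g a) ∧ (g a).cof ≤ #A ∧ f α a < g a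
    · obtain ⟨x, hxT, hx⟩ := hTcof (g a) _ (h.1.succ_lt h.2.2)
      exact ⟨x, by simp [S, h.2.1, hxT], fun _ _ _ => succ_le_iff.1 hx, fun _ => hTsub _ hxT⟩
    · refine ⟨0, by by_cases h' : (g a).cof ≤ #A <;> simp [S, h'], fun h1 h2 h3 =>
        (h ⟨h1, h2, h3⟩).elim, pos_iff_ne_zero.2⟩
  choose h hhS hlow hhigh using this
  obtain ⟨β, hβ, hhβ⟩ := hg.2 h (hlim.mono fun a ha => hhigh a ha.ne_bot)
  refine ⟨h, hhS, β, hβ, ?_, hDF hhβ⟩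
  filter_upwards [hDF hlim, hDsmall, hDF (hg.1 α hα)] with a h1 h2 h3 using hlow a h1 h2 h3

theorem eventually_cof_gt [Infinite A] (hg : IsExactUpperBound F f lo g) (hlo : 0 < lo)
    (hbad : ¬IsBad F f lo) : ∀ᶠ a in F, #A < (g a).cof := by
  by_contra h
  exact hbad (hg.isBad_of_frequently_cof_le (hg.eventually_isSuccLimit hlo)
    ((not_eventually.1 h).mono fun a ha => not_lt.1 ha))

end IsExactUpperBound

theorem exists_isExactUpperBound_cof_gt_or_isBad [Infinite A] (hcof : succ #A < lo.cof)
    (hinc : IncreasingMod F f lo) (hstab : ∀ g, Stabilizes F f lo g) :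
    (∃ g, IsExactUpperBound F f lo g ∧ ∀ a, #A < (g a).cof) ∨ IsBad F f lo := by
  refine or_iff_not_imp_right.2 fun hbad => ?_
  obtain ⟨g, hg⟩ := exists_isExactUpperBound hcof hinc hstab hbad
  have hlo : 0 < lo := Ordinal.cof_pos.1 (zero_le.trans_lt hcof)
  refine ⟨fun a => if #A < (g a).cof then g a else (succ #A).ord,
    hg.congr ((hg.eventually_cof_gt hlo hbad).mono fun a ha => (if_pos ha).symm), fun a => ?_⟩
  dsimp only
  split_ifs with h
  · exact h
  · rw [(isRegular_succ (aleph0_le_mk A)).cof_ord]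
    exact lt_succ _

end Trichotomy

theorem stmt_10_general {A : Type} (hA : Infinite A) (I : Set (Set A))
    (hI₀ : ∅ ∈ I) (hIdown : ∀ s ∈ I, ∀ t, t ⊆ s → t ∈ I)
    (hIunion : ∀ s ∈ I, ∀ t ∈ I, s ∪ t ∈ I)
    (lam : Cardinal.{0}) (hreg : lam.IsRegular) (hgt : (Order.succ (Cardinal.mk A)) < lam)
    (f : Ordinal.{0} → A → Ordinal.{0})
    (hinc : ∀ α β, α < β → β < lam.ord → ltIdeal I (f α) (f β)) :
    -- (Good): an exact upper bound with pointwise cofinality `> |A|`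
    (∃ g : A → Ordinal.{0},
        (∀ α, α < lam.ord → ltIdeal I (f α) g) ∧
        (∀ h : A → Ordinal.{0}, ltIdeal I h g → ∃ α, α < lam.ord ∧ ltIdeal I h (f α)) ∧
        (∀ a, Cardinal.mk A < (g a).cof)) ∨
    -- (Bad): small sets trap the sequence mod an ultrafilter extending the dual of `I`
    (∃ S : A → Set Ordinal.{0},
        (∀ a, Cardinal.mk (S a) ≤ Cardinal.lift.{1,0} (Cardinal.mk A)) ∧
        ∃ D : Ultrafilter A, (∀ s ∈ I, sᶜ ∈ D) ∧
          ∀ α, α < lam.ord → ∃ h : A → Ordinal.{0}, (∀ a, h a ∈ S a) ∧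
            ∃ β, β < lam.ord ∧
              {a | f α a < h a} ∈ D ∧ {a | h a < f β a} ∈ D) ∨
    -- (Ugly): some `g` for which the sets `t_α` do not stabilize mod `I`
    (∃ g : A → Ordinal.{0},
        ¬ ∃ α₀, α₀ < lam.ord ∧ ∀ α β, α₀ ≤ α → α ≤ β → β < lam.ord →
          symmDiff {a | g a < f α a} {a | g a < f β a} ∈ I) := by
  by_cases hugly : ∃ g : A → Ordinal.{0}, ¬ ∃ α₀, α₀ < lam.ord ∧ ∀ α β, α₀ ≤ α → α ≤ β →
      β < lam.ord → symmDiff {a | g a < f α a} {a | g a < f β a} ∈ I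
  · exact Or.inr (Or.inr hugly)
  push Not at hugly
  let F : Filter A := Filter.comk (· ∈ I) hI₀ hIdown hIunion
  have hlt : ∀ g h : A → Ordinal.{0}, ltIdeal I g h ↔ ∀ᶠ a in F, g a < h a := fun g h => by
    simp [ltIdeal, F, Filter.Eventually, compl_ofPred]
  have hstab : ∀ g, Trichotomy.Stabilizes F f lam.ord g := fun g => by
    obtain ⟨α₀, hα₀, hst⟩ := hugly g
    refine ⟨α₀, hα₀, fun β h1 h2 => Filter.mem_comk.2 (hIdown _ (hst α₀ β le_rfl h1 h2) _ ?_)⟩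
    intro a
    simp only [mem_compl_iff, mem_ofPred_eq, mem_symmDiff]
    tauto
  rcases Trichotomy.exists_isExactUpperBound_cof_gt_or_isBad (by rwa [hreg.cof_ord])
    (fun α β h1 h2 => (hlt _ _).1 (hinc α β h1 h2)) hstab with
    ⟨g, ⟨hub, hexact⟩, hcof⟩ | ⟨S, hS, D, hDF, hD⟩
  · refine Or.inl ⟨g, fun α hα => (hlt _ _).2 (hub α hα), fun h hh => ?_, hcof⟩
    obtain ⟨α, hα, hhα⟩ := hexact h ((hlt _ _).1 hh)
    exact ⟨α, hα, (hlt _ _).2 hhα⟩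
  · exact Or.inr (Or.inl ⟨S, hS, D, fun s hs => hDF (Filter.mem_comk.2 (by rwa [compl_compl])), hD⟩)

/-- The Trichotomy Theorem. -/
theorem stmt_10 {A : Type} (hA : Infinite A) (I : Set (Set A))
    (hI₀ : ∅ ∈ I) (hIdown : ∀ s ∈ I, ∀ t, t ⊆ s → t ∈ I)
    (hIunion : ∀ s ∈ I, ∀ t ∈ I, s ∪ t ∈ I) (hIproper : Set.univ ∉ I)
    (lam : Cardinal.{0}) (hreg : lam.IsRegular) (hgt : (Order.succ (Cardinal.mk A)) < lam)
    (f : Ordinal.{0} → A → Ordinal.{0})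
    (hinc : ∀ α β, α < β → β < lam.ord → ltIdeal I (f α) (f β)) :
    -- (Good): an exact upper bound with pointwise cofinality `> |A|`
    (∃ g : A → Ordinal.{0},
        (∀ α, α < lam.ord → ltIdeal I (f α) g) ∧
        (∀ h : A → Ordinal.{0}, ltIdeal I h g → ∃ α, α < lam.ord ∧ ltIdeal I h (f α)) ∧
        (∀ a, Cardinal.mk A < (g a).cof)) ∨
    -- (Bad): small sets trap the sequence mod an ultrafilter extending the dual of `I`
    (∃ S : A → Set Ordinal.{0},
        (∀ a, Cardinal.mk (S a) ≤ Cardinal.lift.{1,0} (Cardinal.mk A)) ∧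
        ∃ D : Ultrafilter A, (∀ s ∈ I, sᶜ ∈ D) ∧
          ∀ α, α < lam.ord → ∃ h : A → Ordinal.{0}, (∀ a, h a ∈ S a) ∧
            ∃ β, β < lam.ord ∧
              {a | f α a < h a} ∈ D ∧ {a | h a < f β a} ∈ D) ∨
    -- (Ugly): some `g` for which the sets `t_α` do not stabilize mod `I`
    (∃ g : A → Ordinal.{0},
        ¬ ∃ α₀, α₀ < lam.ord ∧ ∀ α β, α₀ ≤ α → α ≤ β → β < lam.ord →
          symmDiff {a | g a < f α a} {a | g a < f β a} ∈ I) :=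
  stmt_10_general hA I hI₀ hIdown hIunion lam hreg hgt f hinc
end
end
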